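/- If f : [a,b] → ℝ (0 < a < b) is symmetrized harmonically convex on [a,b], then for every x ∈ [a,b]: f(2ab/(a+b)) ≤ f̆(x) ≤ (f(a)+f(b))/2, where f̆(x) = (1/2)[f(x) + f(abx/((a+b)x - ab))]. -/

import Mathlib

/-!
In the reciprocal variable `u = 1/t`, harmonic convexity on `[a, b]` is ordinary convexity on
`[1/b, 1/a]`, and the involution `t ↦ abt/((a+b)t - ab)` becomes the reflection
`u ↦ 1/a + 1/b - u` about the midpoint of that interval. So `f̆` turns into a convex function
symmetric about the midpoint: it is at most its common value `(f(a) + f(b))/2` at the endpoints,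
and at least its value at the midpoint, which corresponds to `t = 2ab/(a+b)`.
-/

open Set

noncomputable def symTransform (a b : ℝ) (f : ℝ → ℝ) (t : ℝ) : ℝ :=
  (1/2) * (f t + f (a * b * t / ((a + b) * t - a * b)))

def HarmonicConvexOn (s : Set ℝ) (g : ℝ → ℝ) : Prop :=
  ∀ x ∈ s, ∀ y ∈ s, ∀ l ∈ Icc (0:ℝ) 1,
    g (x * y / (l * x + (1 - l) * y)) ≤ (1 - l) * g x + l * g y

theorem HarmonicConvexOn.convexOn_comp_inv {a b : ℝ} {g : ℝ → ℝ} (ha : 0 < a) (hb : 0 < b)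
    (hg : HarmonicConvexOn (Icc a b) g) :
    ConvexOn ℝ (Icc b⁻¹ a⁻¹) (fun u ↦ g u⁻¹) := by
  have pos_of_mem {u : ℝ} (hu : u ∈ Icc b⁻¹ a⁻¹) : 0 < u :=
    (inv_pos.mpr hb).trans_le hu.1
  have inv_mem {u : ℝ} (hu : u ∈ Icc b⁻¹ a⁻¹) : u⁻¹ ∈ Icc a b := by
    have hu0 := pos_of_mem hu
    exact ⟨(le_inv_comm₀ ha hu0).mpr hu.2, (inv_le_comm₀ hu0 hb).mpr hu.1⟩
  refine ⟨convex_Icc _ _, fun u hu v hv s t _ ht hst ↦ ?_⟩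
  have hu0 := (pos_of_mem hu).ne'
  have hv0 := (pos_of_mem hv).ne'
  have hcomb : u⁻¹ * v⁻¹ / (t * u⁻¹ + (1 - t) * v⁻¹) = (s * u + t * v)⁻¹ := by
    rw [← inv_div, ← hst]
    congr 1
    field_simp [hu0, hv0]
    ring
  have h := hg _ (inv_mem hu) _ (inv_mem hv) t ⟨ht, by linarith⟩
  rw [hcomb, show 1 - t = s by linarith] at h
  exact h

theorem ConvexOn.apply_half_le_of_apply_sub_eq {s : Set ℝ} {φ : ℝ → ℝ}
    (hφ : ConvexOn ℝ s φ) {c u : ℝ} (hu : u ∈ s) (hcu : c - u ∈ s)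
    (hsymm : φ (c - u) = φ u) : φ (c / 2) ≤ φ u := by
  have hhalf : (0:ℝ) ≤ 1/2 := by norm_num
  have h := hφ.2 hu hcu hhalf hhalf (by norm_num)
  simp only [smul_eq_mul, hsymm] at h
  calc φ (c / 2) = φ (1/2 * u + 1/2 * (c - u)) := by congr 1; ring
    _ ≤ φ u := by linarith

theorem symTransform_inv {a b : ℝ} (f : ℝ → ℝ) (ha : a ≠ 0) (hb : b ≠ 0) {u : ℝ}
    (hu : u ≠ 0) :
    symTransform a b f u⁻¹ = (f u⁻¹ + f (a⁻¹ + b⁻¹ - u)⁻¹) / 2 := by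
  have hreflect : a * b * u⁻¹ / ((a + b) * u⁻¹ - a * b) = (a⁻¹ + b⁻¹ - u)⁻¹ := by
    rw [← inv_div]
    congr 1
    field_simp
    ring
  rw [symTransform, hreflect]
  ring

theorem symTransform_inv_sub {a b : ℝ} (f : ℝ → ℝ) (ha : a ≠ 0) (hb : b ≠ 0) {u : ℝ}
    (hu : u ≠ 0) (hu' : a⁻¹ + b⁻¹ - u ≠ 0) :
    symTransform a b f (a⁻¹ + b⁻¹ - u)⁻¹ = symTransform a b f u⁻¹ := by
  rw [symTransform_inv f ha hb hu, symTransform_inv f ha hb hu', sub_sub_cancel, add_comm]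

/-- Pointwise bounds for the symmetrical transform of a symmetrized
harmonically convex function. -/
theorem symTransform_bounds (a b : ℝ) (f : ℝ → ℝ)
    (ha : 0 < a) (hab : a < b)
    (hshc : ∀ x ∈ Set.Icc a b, ∀ y ∈ Set.Icc a b, ∀ l ∈ Set.Icc (0:ℝ) 1,
      symTransform a b f (x * y / (l * x + (1 - l) * y)) ≤
        (1 - l) * symTransform a b f x + l * symTransform a b f y) :
    ∀ x ∈ Set.Icc a b,
      f (2 * a * b / (a + b)) ≤ symTransform a b f x ∧
        symTransform a b f x ≤ (f a + f b) / 2 := by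
  intro x ⟨hax, hxb⟩
  have hb : 0 < b := ha.trans hab
  have hx : 0 < x := ha.trans_le hax
  have hconv := HarmonicConvexOn.convexOn_comp_inv ha hb hshc
  set c := a⁻¹ + b⁻¹
  have hxu : x⁻¹ ∈ Icc b⁻¹ a⁻¹ := ⟨inv_anti₀ hx hxb, inv_anti₀ ha hax⟩
  have hxu' : c - x⁻¹ ∈ Icc b⁻¹ a⁻¹ := ⟨by linarith [hxu.2], by linarith [hxu.1]⟩
  have hcx : c - x⁻¹ ≠ 0 := (hxu'.1.trans_lt' (by positivity)).ne'
  have hval_a : symTransform a b f a⁻¹⁻¹ = (f a + f b) / 2 := by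
    simpa using symTransform_inv f ha.ne' hb.ne' (inv_ne_zero ha.ne')
  have hval_b : symTransform a b f b⁻¹⁻¹ = (f a + f b) / 2 := by
    simpa [c, add_comm] using symTransform_inv f ha.ne' hb.ne' (inv_ne_zero hb.ne')
  have hval_mid : symTransform a b f (c / 2)⁻¹ = f (2 * a * b / (a + b)) := by
    rw [symTransform_inv f ha.ne' hb.ne' (by positivity), show c - c / 2 = c / 2 by ring,
      show 2 * a * b / (a + b) = (c / 2)⁻¹ by simp only [c]; field_simp; ring]
    ring
  constructor
  · rw [← hval_mid, ← inv_inv x]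
    exact hconv.apply_half_le_of_apply_sub_eq hxu hxu'
      (symTransform_inv_sub f ha.ne' hb.ne' (inv_ne_zero hx.ne') hcx)
  · rw [← inv_inv x]
    have h := hconv.le_max_of_mem_Icc (left_mem_Icc.mpr (hxu.1.trans hxu.2))
      (right_mem_Icc.mpr (hxu.1.trans hxu.2)) hxu
    rwa [hval_a, hval_b, max_self] at h
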